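/- Let a ≥ 0, λ > 0, and suppose f ∈ H³(-1,0) satisfies f''' + (a - λ) f' = g with f(-1) = f(0) = f'(0) = 0, for some g ∈ L²(-1,0). Then (3/2) λ ∫_{-1}^0 |f'(x)|² dx + (λ - a)(λ/2) ∫_{-1}^0 |f(x)|² dx = λ ∫_{-1}^0 (x+1) f(x) g(x) dx. -/

import Mathlib

/-!
Multiplying the equation by `(x + 1) f` and integrating by parts turns every term into a
derivative plus a multiple of `f'²` or `f²`: the third-order term contributes
`((x + 1) f f'' - f f' - (x + 1) f'² / 2)' + (3/2) f'²` and the first-order term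
`(c (x + 1) f² / 2)' - (c / 2) f²`, where `c = a - λ`. The resulting boundary flux vanishes at
both ends: at `-1` because of the weight and `f (-1) = 0`, at `0` because `f 0 = f' 0 = 0`.
-/

open MeasureTheory

noncomputable def multiplierFlux (c : ℝ) (f : ℝ → ℝ) (x : ℝ) : ℝ :=
  (x + 1) * f x * iteratedDeriv 2 f x - f x * deriv f x - (x + 1) * deriv f x ^ 2 / 2
    + c * (x + 1) * f x ^ 2 / 2

section

variable {f : ℝ → ℝ}

theorem ContDiff.hasDerivAt_iteratedDeriv {n : ℕ} (hf : ContDiff ℝ (n + 1) f) (x : ℝ) :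
    HasDerivAt (iteratedDeriv n f) (iteratedDeriv (n + 1) f x) x := by
  rw [iteratedDeriv_succ]
  exact (hf.differentiable_iteratedDeriv' n x).hasDerivAt

theorem hasDerivAt_multiplierFlux (hf : ContDiff ℝ 3 f) (c x : ℝ) :
    HasDerivAt (multiplierFlux c f)
      ((x + 1) * f x * (iteratedDeriv 3 f x + c * deriv f x)
        - 3 / 2 * deriv f x ^ 2 + c / 2 * f x ^ 2) x := by
  have h0 : HasDerivAt f (deriv f x) x :=
    (hf.differentiable (by norm_num) x).hasDerivAt
  have h1 : HasDerivAt (deriv f) (iteratedDeriv 2 f x) x := by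
    simpa only [iteratedDeriv_one] using
      (hf.of_le (by norm_num) : ContDiff ℝ (1 + 1) f).hasDerivAt_iteratedDeriv x
  have h2 : HasDerivAt (iteratedDeriv 2 f) (iteratedDeriv 3 f x) x :=
    hf.hasDerivAt_iteratedDeriv x
  have hw : HasDerivAt (fun x : ℝ => x + 1) 1 x := (hasDerivAt_id x).add_const 1
  have := ((((hw.mul h0).mul h2).sub (h0.mul h1)).sub ((hw.mul (h1.pow 2)).div_const 2)).add
    (((hw.const_mul c).mul (h0.pow 2)).div_const 2)
  refine this.congr_deriv ?_
  simp only [Pi.mul_apply, Pi.pow_apply]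
  ring

theorem integral_multiplier_eq_flux_sub (hf : ContDiff ℝ 3 f) (c u v : ℝ) :
    ∫ x in u..v, ((x + 1) * f x * (iteratedDeriv 3 f x + c * deriv f x)
        - 3 / 2 * deriv f x ^ 2 + c / 2 * f x ^ 2) =
      multiplierFlux c f v - multiplierFlux c f u := by
  refine intervalIntegral.integral_eq_sub_of_hasDerivAt
    (fun x _ => hasDerivAt_multiplierFlux hf c x) (Continuous.intervalIntegrable ?_ u v)
  have h0 : Continuous f := hf.continuous
  have h1 : Continuous (deriv f) := hf.continuous_deriv (by norm_num)
  have h3 : Continuous (iteratedDeriv 3 f) := hf.continuous_iteratedDeriv' 3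
  fun_prop

end

theorem multiplier_identity_one_general (a lam : ℝ)
    (f g : ℝ → ℝ) (hf : ContDiff ℝ 3 f) (hg : Continuous g)
    (heq : ∀ x ∈ Set.Icc (-1:ℝ) 0,
      iteratedDeriv 3 f x + (a - lam) * deriv f x = g x)
    (hb1 : f (-1) = 0) (hb2 : f 0 = 0) (hb3 : deriv f 0 = 0) :
    (3/2) * lam * (∫ x in (-1:ℝ)..0, (deriv f x)^2) +
      (lam - a) * (lam / 2) * (∫ x in (-1:ℝ)..0, (f x)^2) =
    lam * (∫ x in (-1:ℝ)..0, (x + 1) * f x * g x) := by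
  have h0 : Continuous f := hf.continuous
  have h1 : Continuous (deriv f) := hf.continuous_deriv (by norm_num)
  have hflux := integral_multiplier_eq_flux_sub hf (a - lam) (-1) 0
  have hzero : multiplierFlux (a - lam) f 0 - multiplierFlux (a - lam) f (-1) = 0 := by
    simp only [multiplierFlux, hb1, hb2, hb3]
    ring
  rw [hzero, intervalIntegral.integral_congr (g := fun x => (x + 1) * f x * g x
      - 3 / 2 * deriv f x ^ 2 + (a - lam) / 2 * f x ^ 2) fun x hx => by
        rw [Set.uIcc_of_le (by norm_num)] at hx
        simp only [heq x hx],
    intervalIntegral.integral_add (by apply Continuous.intervalIntegrable; fun_prop)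
      (by apply Continuous.intervalIntegrable; fun_prop),
    intervalIntegral.integral_sub (by apply Continuous.intervalIntegrable; fun_prop)
      (by apply Continuous.intervalIntegrable; fun_prop),
    intervalIntegral.integral_const_mul, intervalIntegral.integral_const_mul] at hflux
  linear_combination (-lam) * hflux

theorem multiplier_identity_one (a lam : ℝ) (ha : 0 ≤ a) (hlam : 0 < lam)
    (f g : ℝ → ℝ) (hf : ContDiff ℝ 3 f) (hg : Continuous g)
    (heq : ∀ x ∈ Set.Icc (-1:ℝ) 0,
      iteratedDeriv 3 f x + (a - lam) * deriv f x = g x)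
    (hb1 : f (-1) = 0) (hb2 : f 0 = 0) (hb3 : deriv f 0 = 0) :
    (3/2) * lam * (∫ x in (-1:ℝ)..0, (deriv f x)^2) +
      (lam - a) * (lam / 2) * (∫ x in (-1:ℝ)..0, (f x)^2) =
    lam * (∫ x in (-1:ℝ)..0, (x + 1) * f x * g x) :=
  multiplier_identity_one_general a lam f g hf hg heq hb1 hb2 hb3
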